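/- Under the hypotheses of the Fourier stability recursion, by induction on i one obtains |ω^i| ≤ |ω⁰| for all 0 ≤ i ≤ N, where ω^{i+1} is given by the amplification recursion with monotone increasing positive coefficients w_{i,k} satisfying w_{i,0} < w_{i,1} < ⋯ < w_{i,i}. -/

import Mathlib

/-!
Write the recursion as `ω^{i+1} = (A X - B ω^i + C ω^i) / D`. Since the weights `w_{i,k} - w_{i,k-1}`
and `w_{i,0}` are positive and telescope to `w_{i,i}`, the history term satisfies
`‖X‖ ≤ w_{i,i} max_{k ≤ i} ‖ω^k‖`. The choice `μ_i = βσ + w_{i,i}` gives the identity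
`D = A w_{i,i} + B + C + (2σ - 1) S / μ_i` with `S = λ₁a₂b₁ + λ₂a₁b₂ + βa₁a₂ ≥ 0`, so for
`σ ≥ 1/2` the total mass of the coefficients is at most `D`, and strong induction on `i` closes.
-/

open Finset

theorem Finset.sum_Icc_one_sub_pred (f : ℕ → ℝ) (i : ℕ) :
    ∑ k ∈ Icc 1 i, (f k - f (k - 1)) = f i - f 0 := by
  induction i with
  | zero => simp
  | succ n ih =>
    rw [sum_Icc_succ_top (Nat.succ_le_succ n.zero_le), ih]
    simp

theorem Nat.forall_le_of_strong_succ {P : ℕ → Prop} {N : ℕ} (h0 : P 0)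
    (hstep : ∀ j < N, (∀ k ≤ j, P k) → P (j + 1)) : ∀ i ≤ N, P i := by
  intro i
  induction i using Nat.strong_induction_on with
  | _ i ih =>
    intro hi
    match i with
    | 0 => exact h0
    | j + 1 => exact hstep j hi fun k hk => ih k (Nat.lt_succ_of_le hk) (by omega)

theorem norm_sum_weight_increments_le {w : ℕ → ℝ} {i : ℕ} {ω : ℕ → ℂ} {M : ℝ}
    (hw0 : 0 ≤ w 0) (hw : MonotoneOn w (Set.Iic i)) (hω : ∀ k ≤ i, ‖ω k‖ ≤ M) :
    ‖∑ k ∈ Icc 1 i, ((w k - w (k - 1) : ℝ) : ℂ) * ω k + ((w 0 : ℝ) : ℂ) * ω 0‖ ≤ w i * M := by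
  have hsum : ‖∑ k ∈ Icc 1 i, ((w k - w (k - 1) : ℝ) : ℂ) * ω k‖
      ≤ ∑ k ∈ Icc 1 i, (w k - w (k - 1)) * M := by
    refine norm_sum_le_of_le _ fun k hk => ?_
    obtain ⟨-, hki⟩ := mem_Icc.mp hk
    have hinc : 0 ≤ w k - w (k - 1) :=
      sub_nonneg.mpr (hw (Set.mem_Iic.mpr (by omega)) (Set.mem_Iic.mpr hki) (Nat.sub_le k 1))
    rw [norm_mul, Complex.norm_real, Real.norm_of_nonneg hinc]
    exact mul_le_mul_of_nonneg_left (hω k hki) hinc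
  have hfirst : ‖((w 0 : ℝ) : ℂ) * ω 0‖ ≤ w 0 * M := by
    rw [norm_mul, Complex.norm_real, Real.norm_of_nonneg hw0]
    exact mul_le_mul_of_nonneg_left (hω 0 i.zero_le) hw0
  calc _ ≤ ∑ k ∈ Icc 1 i, (w k - w (k - 1)) * M + w 0 * M :=
        (norm_add_le _ _).trans (add_le_add hsum hfirst)
    _ = w i * M := by rw [← sum_mul, sum_Icc_one_sub_pred]; ring

theorem norm_div_le_of_coeff_sum_le {A B C D W M : ℝ} {X y : ℂ}
    (hA : 0 ≤ A) (hB : 0 ≤ B) (hC : 0 ≤ C) (hD : 0 < D) (hM : 0 ≤ M)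
    (hX : ‖X‖ ≤ W * M) (hy : ‖y‖ ≤ M) (hcoeff : A * W + B + C ≤ D) :
    ‖((A : ℂ) * X - (B : ℂ) * y + (C : ℂ) * y) / (D : ℂ)‖ ≤ M := by
  have hnorm (r : ℝ) (hr : 0 ≤ r) (z : ℂ) : ‖(r : ℂ) * z‖ = r * ‖z‖ := by
    rw [norm_mul, Complex.norm_real, Real.norm_of_nonneg hr]
  rw [norm_div, Complex.norm_real, Real.norm_of_nonneg hD.le, div_le_iff₀ hD]
  calc ‖(A : ℂ) * X - (B : ℂ) * y + (C : ℂ) * y‖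
      ≤ ‖(A : ℂ) * X‖ + ‖(B : ℂ) * y‖ + ‖(C : ℂ) * y‖ :=
        (norm_add_le _ _).trans (add_le_add_left (norm_sub_le _ _) _)
    _ ≤ A * (W * M) + B * M + C * M := by
        rw [hnorm A hA, hnorm B hB, hnorm C hC]
        gcongr
    _ = (A * W + B + C) * M := by ring
    _ ≤ M * D := by nlinarith

section Coefficients

variable {β σ lam₁ lam₂ a₁ a₂ b₁ b₂ w μ : ℝ}

theorem amplification_denom_eq (hμ : μ = β * σ + w) (hμ0 : μ ≠ 0) :
    (a₁ + σ * lam₁ / μ * b₁) * (a₂ + σ * lam₂ / μ * b₂)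
      = a₁ * a₂ / μ * w + (1 - σ) / μ * (lam₁ * a₂ * b₁ + lam₂ * a₁ * b₂ + β * a₁ * a₂)
        + σ ^ 2 / μ ^ 2 * (lam₁ * lam₂ * b₁ * b₂)
        + (2 * σ - 1) / μ * (lam₁ * a₂ * b₁ + lam₂ * a₁ * b₂ + β * a₁ * a₂) := by
  field_simp
  rw [hμ]
  ring

theorem amplification_coeff_sum_le (hσ : 1 / 2 ≤ σ) (hβ : 0 ≤ β)
    (hlam₁ : 0 ≤ lam₁) (hlam₂ : 0 ≤ lam₂) (ha₁ : 0 ≤ a₁) (ha₂ : 0 ≤ a₂) (hb₁ : 0 ≤ b₁) (hb₂ : 0 ≤ b₂)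
    (hμ : μ = β * σ + w) (hμ0 : 0 < μ) :
    a₁ * a₂ / μ * w + (1 - σ) / μ * (lam₁ * a₂ * b₁ + lam₂ * a₁ * b₂ + β * a₁ * a₂)
        + σ ^ 2 / μ ^ 2 * (lam₁ * lam₂ * b₁ * b₂)
      ≤ (a₁ + σ * lam₁ / μ * b₁) * (a₂ + σ * lam₂ / μ * b₂) := by
  rw [amplification_denom_eq hμ hμ0.ne']
  have hexcess : 0 ≤ (2 * σ - 1) / μ * (lam₁ * a₂ * b₁ + lam₂ * a₁ * b₂ + β * a₁ * a₂) :=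
    mul_nonneg (div_nonneg (by linarith) hμ0.le) (by positivity)
  linarith

end Coefficients

theorem fourier_stability_full_induction
    (beta sigma lam1 lam2 a1 a2 b1 b2 : ℝ)
    (hbeta : 0 ≤ beta) (hsigma : sigma ∈ Set.Ioc (1 / 2 : ℝ) 1)
    (hlam1 : 0 < lam1) (hlam2 : 0 < lam2)
    (ha1 : 2 / 3 ≤ a1) (ha2 : 2 / 3 ≤ a2) (hb1 : 0 ≤ b1) (hb2 : 0 ≤ b2)
    (N : ℕ) (w : ℕ → ℕ → ℝ)
    (hw0 : ∀ i, 0 < w i 0)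
    (hwmono : ∀ i k, k < i → w i k < w i (k + 1))
    (mu : ℕ → ℝ) (hmu : ∀ i, mu i = beta * sigma + w i i)
    (omega : ℕ → ℂ)
    (hrec : ∀ i, i < N → omega (i + 1) =
      (((a1 * a2 / mu i : ℝ) : ℂ) *
          ((∑ k ∈ Finset.Icc 1 i, (((w i k - w i (k - 1) : ℝ)) : ℂ) * omega k)
            + ((w i 0 : ℝ) : ℂ) * omega 0)
        - (((1 - sigma) / mu i * (lam1 * a2 * b1 + lam2 * a1 * b2 + beta * a1 * a2) : ℝ) : ℂ)
            * omega i
        + ((sigma ^ 2 / (mu i) ^ 2 * (lam1 * lam2 * b1 * b2) : ℝ) : ℂ) * omega i)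
      / (((a1 + sigma * lam1 / mu i * b1 : ℝ) : ℂ)
          * ((a2 + sigma * lam2 / mu i * b2 : ℝ) : ℂ))) :
    ∀ i, i ≤ N → ‖omega i‖ ≤ ‖omega 0‖ := by
  obtain ⟨hσ, hσ1⟩ := hsigma
  have ha1' : 0 < a1 := by linarith
  have ha2' : 0 < a2 := by linarith
  refine Nat.forall_le_of_strong_succ le_rfl fun j hj ih => ?_
  have hwj : MonotoneOn (w j) (Set.Iic j) :=
    (strictMonoOn_Iic_of_lt_succ fun k hk => hwmono j k hk).monotoneOn
  have hμ : 0 < mu j := by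
    have hwjj : 0 < w j j :=
      (hw0 j).trans_le (hwj (Set.mem_Iic.mpr j.zero_le) (Set.mem_Iic.mpr le_rfl) j.zero_le)
    rw [hmu]
    positivity
  rw [hrec j hj, ← Complex.ofReal_mul]
  exact norm_div_le_of_coeff_sum_le (by positivity)
    (mul_nonneg (div_nonneg (by linarith) hμ.le) (by positivity)) (by positivity)
    (by positivity) (norm_nonneg _) (norm_sum_weight_increments_le (hw0 j).le hwj ih)
    (ih j le_rfl) (amplification_coeff_sum_le hσ.le hbeta hlam1.le hlam2.le ha1'.le ha2'.le
      hb1 hb2 (hmu j) hμ)
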